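/- For all real parameters α and β, the polynomial F̃₂(x,t;α,β) = x⁶ + (3t² + 25/3)x⁴ + (3t⁴ + 30t² − 125/9)x² + t⁶ + (17/3)t⁴ + (475/9)t² + 625/9 + 2αt(3x² − t² + 5/3) + 2βx(x² − 3t² − 1/3) + α² + β² satisfies, as a function of (x,t) ∈ ℝ², the bilinear Boussinesq equation F·F_tt − (F_t)² + F·F_xx − (F_x)² − (1/3)(F·F_xxxx − 4·F_x·F_xxx + 3·(F_xx)²) = 0. -/

import Mathlib

/-- Partial derivative in the first (space) variable. -/
noncomputable def dX (f : ℝ → ℝ → ℝ) : ℝ → ℝ → ℝ := fun x t => deriv (fun x' => f x' t) x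

/-- Partial derivative in the second (time) variable. -/
noncomputable def dT (f : ℝ → ℝ → ℝ) : ℝ → ℝ → ℝ := fun x t => deriv (fun t' => f x t') t

/-- The bilinear Boussinesq equation
`F·F_tt − (F_t)² + F·F_xx − (F_x)² − (1/3)(F·F_xxxx − 4 F_x F_xxx + 3 (F_xx)²) = 0`. -/
def IsBilinearBQSolution (F : ℝ → ℝ → ℝ) : Prop :=
  ∀ x t : ℝ,
    F x t * dT (dT F) x t - (dT F x t) ^ 2 + F x t * dX (dX F) x t - (dX F x t) ^ 2
      - (1 / 3) * (F x t * dX (dX (dX (dX F))) x t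
          - 4 * dX F x t * dX (dX (dX F)) x t + 3 * (dX (dX F) x t) ^ 2) = 0

/-- The polynomial `F₂(x,t)`. -/
noncomputable def F2 (x t : ℝ) : ℝ :=
  x ^ 6 + (3 * t ^ 2 + 25 / 3) * x ^ 4 + (3 * t ^ 4 + 30 * t ^ 2 - 125 / 9) * x ^ 2
    + t ^ 6 + (17 / 3) * t ^ 4 + (475 / 9) * t ^ 2 + 625 / 9

/-- `P₁(x,t) = 3x² − t² + 5/3`. -/
noncomputable def P1 (x t : ℝ) : ℝ := 3 * x ^ 2 - t ^ 2 + 5 / 3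

/-- `Q₁(x,t) = x² − 3t² − 1/3`. -/
noncomputable def Q1 (x t : ℝ) : ℝ := x ^ 2 - 3 * t ^ 2 - 1 / 3

open MvPolynomial

/-! The partial derivatives of a polynomial function `F = eval p` are the evaluations of the formal
partial derivatives of `p`. Hence the bilinear Boussinesq expression of `F` is the evaluation of a
polynomial built from `p` (its Hirota form), and `F` is a solution exactly when that polynomial
vanishes. For `F̃₂` it does, identically in `α` and `β`, by direct expansion. -/

theorem MvPolynomial.hasDerivAt_eval_update {σ 𝕜 : Type*} [NontriviallyNormedField 𝕜]
    [DecidableEq σ] (p : MvPolynomial σ 𝕜) (x : σ → 𝕜) (i : σ) (s : 𝕜) :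
    HasDerivAt (fun s => eval (Function.update x i s) p)
      (eval (Function.update x i s) (pderiv i p)) s := by
  induction p using MvPolynomial.induction_on with
  | C a => simpa using hasDerivAt_const s a
  | add p q hp hq => simp only [map_add]; exact hp.add hq
  | mul_X p j hp =>
    simp only [map_mul, eval_X, pderiv_mul, map_add]
    rcases eq_or_ne j i with rfl | hji
    · simp only [Function.update_self, pderiv_X_self, map_one, mul_one]
      simpa using hp.fun_mul (hasDerivAt_id' s)
    · simp only [Function.update_of_ne hji, pderiv_X_of_ne hji, map_zero, mul_zero, add_zero]
      exact hp.mul_const (x j)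

theorem dX_eval (p : MvPolynomial (Fin 2) ℝ) :
    dX (fun x t => eval ![x, t] p) = fun x t => eval ![x, t] (pderiv 0 p) := by
  funext x t
  have hupdate (s : ℝ) : Function.update ![x, t] 0 s = ![s, t] := by
    ext j; fin_cases j <;> rfl
  simpa only [dX, hupdate] using (p.hasDerivAt_eval_update ![x, t] 0 x).deriv

theorem dT_eval (p : MvPolynomial (Fin 2) ℝ) :
    dT (fun x t => eval ![x, t] p) = fun x t => eval ![x, t] (pderiv 1 p) := by
  funext x t
  have hupdate (s : ℝ) : Function.update ![x, t] 1 s = ![x, s] := by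
    ext j; fin_cases j <;> rfl
  simpa only [dT, hupdate] using (p.hasDerivAt_eval_update ![x, t] 1 t).deriv

/-- The Hirota form `(D_t² + D_x² − D_x⁴/3) p·p / 2` of the bilinear Boussinesq operator,
with `X 0 = x` and `X 1 = t`. -/
noncomputable def bilinearBQPoly (p : MvPolynomial (Fin 2) ℝ) : MvPolynomial (Fin 2) ℝ :=
  p * pderiv 1 (pderiv 1 p) - pderiv 1 p ^ 2 + p * pderiv 0 (pderiv 0 p) - pderiv 0 p ^ 2
    - C (1 / 3) * (p * pderiv 0 (pderiv 0 (pderiv 0 (pderiv 0 p)))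
        - 4 * pderiv 0 p * pderiv 0 (pderiv 0 (pderiv 0 p)) + 3 * pderiv 0 (pderiv 0 p) ^ 2)

theorem isBilinearBQSolution_eval_iff (p : MvPolynomial (Fin 2) ℝ) :
    IsBilinearBQSolution (fun x t => eval ![x, t] p) ↔ bilinearBQPoly p = 0 := by
  have hvec (v : Fin 2 → ℝ) : ![v 0, v 1] = v := by ext j; fin_cases j <;> rfl
  simp only [IsBilinearBQSolution, dX_eval, dT_eval, MvPolynomial.funext_iff, map_zero]
  constructor
  · intro h v
    simpa [bilinearBQPoly, hvec] using h (v 0) (v 1)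
  · intro h x t
    simpa [bilinearBQPoly] using h ![x, t]

noncomputable def F2Poly : MvPolynomial (Fin 2) ℝ :=
  X 0 ^ 6 + (C 3 * X 1 ^ 2 + C (25 / 3)) * X 0 ^ 4
    + (C 3 * X 1 ^ 4 + C 30 * X 1 ^ 2 - C (125 / 9)) * X 0 ^ 2
    + X 1 ^ 6 + C (17 / 3) * X 1 ^ 4 + C (475 / 9) * X 1 ^ 2 + C (625 / 9)

noncomputable def P1Poly : MvPolynomial (Fin 2) ℝ := C 3 * X 0 ^ 2 - X 1 ^ 2 + C (5 / 3)

noncomputable def Q1Poly : MvPolynomial (Fin 2) ℝ := X 0 ^ 2 - C 3 * X 1 ^ 2 - C (1 / 3)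

noncomputable def F2TildePoly (α β : ℝ) : MvPolynomial (Fin 2) ℝ :=
  F2Poly + C (2 * α) * X 1 * P1Poly + C (2 * β) * X 0 * Q1Poly + C (α ^ 2 + β ^ 2)

theorem eval_F2TildePoly (α β x t : ℝ) :
    eval ![x, t] (F2TildePoly α β)
      = F2 x t + 2 * α * t * P1 x t + 2 * β * x * Q1 x t + α ^ 2 + β ^ 2 := by
  simp only [F2TildePoly, F2Poly, P1Poly, Q1Poly, F2, P1, Q1, map_add, map_sub, map_mul,
    map_pow, eval_X, eval_C, Matrix.cons_val_zero, Matrix.cons_val_one, Matrix.cons_val_fin_one]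
  ring

theorem bilinearBQPoly_F2TildePoly (α β : ℝ) : bilinearBQPoly (F2TildePoly α β) = 0 := by
  refine MvPolynomial.funext fun v => ?_
  have h10 : (1 : Fin 2) ≠ 0 := by decide
  -- `pderiv_pow` yields casts `((n : ℕ) : MvPolynomial _ ℝ)`; they must stay casts (no
  -- `Nat.cast_ofNat`) until `Derivation.map_natCast` has removed their derivatives.
  simp only [bilinearBQPoly, F2TildePoly, F2Poly, P1Poly, Q1Poly, map_add, map_sub, map_neg,
    pderiv_mul, pderiv_pow, pderiv_C, pderiv_X_self, pderiv_X_of_ne h10, pderiv_X_of_ne h10.symm,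
    Derivation.map_natCast, mul_zero, zero_mul, add_zero, zero_add, zero_sub, neg_zero, mul_one,
    Nat.reduceSub, pow_one]
  simp only [map_add, map_sub, map_mul, map_pow, map_natCast, map_ofNat, map_neg, map_zero,
    eval_X, eval_C]
  ring

theorem bilinear_F2_tilde (α β : ℝ) :
    IsBilinearBQSolution
      (fun x t => F2 x t + 2 * α * t * P1 x t + 2 * β * x * Q1 x t + α ^ 2 + β ^ 2) := by
  simp only [← eval_F2TildePoly, isBilinearBQSolution_eval_iff, bilinearBQPoly_F2TildePoly]
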